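/- For a complex 3×3 matrix Δ, the equality B + C = (2/3)A (with A = (tr(ΔΔ†))², B = tr((ΔΔ†)²), C = tr(ΔΔᵀ(ΔΔᵀ)†)) holds if and only if the real symmetric part of Z = Δ†Δ is a scalar multiple of the identity matrix. -/

import Mathlib

/-!
Let `Z = Δᴴ Δ` and let `S` be its entrywise real part. By cyclicity of the trace, `B = tr (Z Z)`
and `C = tr (Z Zᵀ)`, and since `Z` is Hermitian these are `∑ |Z i j|²` and `∑ (Z i j)²`, so
`B + C = 2 ∑ (S i j)²`; also `A = (tr S)²`. For a real `n × n` matrix,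
`n ∑ (S i j)² - (tr S)² = n ∑ ((S - (tr S / n) • 1) i j)²`, which vanishes exactly when `S` is
scalar.
-/

open Matrix

variable {m n : Type*} [Fintype m] [Fintype n]

theorem Matrix.IsHermitian.re_trace_mul_self_add_re_trace_mul_transpose {Z : Matrix n n ℂ}
    (hZ : Z.IsHermitian) :
    (Z * Z).trace.re + (Z * Zᵀ).trace.re = 2 * ∑ i, ∑ j, (Z i j).re ^ 2 := by
  simp only [trace, diag_apply, mul_apply, transpose_apply, Complex.re_sum,
    ← Finset.sum_add_distrib, Finset.mul_sum]
  refine Finset.sum_congr rfl fun i _ => Finset.sum_congr rfl fun j _ => ?_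
  rw [← hZ.apply i j]
  simp only [Complex.mul_re, Complex.star_def, Complex.conj_re, Complex.conj_im]
  ring

theorem trace_mul_conjTranspose_mul_mul_conjTranspose (Δ : Matrix m n ℂ) :
    (Δ * Δᴴ * (Δ * Δᴴ)).trace = (Δᴴ * Δ * (Δᴴ * Δ)).trace := by
  simp only [← Matrix.mul_assoc]
  rw [trace_mul_comm]
  simp only [Matrix.mul_assoc]

theorem trace_mul_transpose_mul_conjTranspose_mul_transpose (Δ : Matrix m n ℂ) :
    (Δ * Δᵀ * (Δ * Δᵀ)ᴴ).trace = (Δᴴ * Δ * (Δᴴ * Δ)ᵀ).trace := by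
  rw [conjTranspose_mul, transpose_mul, transpose_conjTranspose, conjTranspose_transpose]
  simp only [← Matrix.mul_assoc]
  rw [trace_mul_comm]
  simp only [Matrix.mul_assoc]

section Real

variable [DecidableEq n]

theorem sum_sq_sub_diagonal_const (S : Matrix n n ℝ) (c : ℝ) :
    ∑ i, ∑ j, (S - diagonal fun _ => c : Matrix n n ℝ) i j ^ 2 =
      ∑ i, ∑ j, S i j ^ 2 - 2 * c * S.trace + Fintype.card n * c ^ 2 := by
  simp [sub_sq, diagonal_apply, ite_pow, Finset.sum_add_distrib, Finset.sum_sub_distrib, trace,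
    Finset.mul_sum, mul_ite, mul_comm, mul_left_comm]

theorem sq_trace_eq_card_mul_sum_sq_iff [Nonempty n] (S : Matrix n n ℝ) :
    S.trace ^ 2 = Fintype.card n * ∑ i, ∑ j, S i j ^ 2 ↔ ∃ r : ℝ, S = diagonal fun _ => r := by
  have hn : (0 : ℝ) < Fintype.card n := by exact_mod_cast Fintype.card_pos
  constructor
  · intro h
    have hzero : ∑ i, ∑ j,
        (S - diagonal fun _ => S.trace / Fintype.card n : Matrix n n ℝ) i j ^ 2 = 0 := by
      rw [sum_sq_sub_diagonal_const]
      field_simp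
      linarith
    refine ⟨S.trace / Fintype.card n, sub_eq_zero.mp (Matrix.ext fun i j => ?_)⟩
    have hrow := (Finset.sum_eq_zero_iff_of_nonneg fun _ _ =>
      Finset.sum_nonneg fun _ _ => sq_nonneg _).mp hzero i (Finset.mem_univ _)
    have hij := (Finset.sum_eq_zero_iff_of_nonneg fun _ _ => sq_nonneg _).mp hrow j
      (Finset.mem_univ _)
    simpa using hij
  · rintro ⟨r, rfl⟩
    simp only [trace, diag_apply, diagonal_apply, ite_pow, ne_eq, OfNat.ofNat_ne_zero,
      not_false_eq_true, zero_pow, Finset.sum_ite_eq, Finset.mem_univ, ↓reduceIte,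
      Finset.sum_const, Finset.card_univ, nsmul_eq_mul]
    ring

end Real

/-- `B + C = (2/3) A` holds if and only if the real symmetric part of `Z = Δ†Δ`
is a scalar multiple of the identity. -/
theorem invariant_equality_oblate (Δ : Matrix (Fin 3) (Fin 3) ℂ)
    (A B C : ℝ)
    (hA : A = ((Δ * Δᴴ).trace).re ^ 2)
    (hB : B = ((Δ * Δᴴ * (Δ * Δᴴ)).trace).re)
    (hC : C = ((Δ * Δᵀ * (Δ * Δᵀ)ᴴ).trace).re) :
    B + C = 2 / 3 * A ↔
      ∃ r : ℝ, ∀ i j : Fin 3, ((Δᴴ * Δ) i j).re = if i = j then r else 0 := by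
  set S := (Δᴴ * Δ).map Complex.re
  have hBC : B + C = 2 * ∑ i, ∑ j, S i j ^ 2 := by
    rw [hB, hC, trace_mul_conjTranspose_mul_mul_conjTranspose,
      trace_mul_transpose_mul_conjTranspose_mul_transpose,
      (isHermitian_conjTranspose_mul_self Δ).re_trace_mul_self_add_re_trace_mul_transpose]
    rfl
  have hA' : A = S.trace ^ 2 := by
    rw [hA, trace_mul_comm]
    exact congrArg (· ^ 2) (AddMonoidHom.map_trace Complex.reAddGroupHom (Δᴴ * Δ))
  have hS := sq_trace_eq_card_mul_sum_sq_iff S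
  simp only [← Matrix.ext_iff, diagonal_apply, Fintype.card_fin, Nat.cast_ofNat] at hS
  rw [hA', hBC]
  exact Iff.trans ⟨fun h => by linarith, fun h => by linarith⟩ hS
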